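/- Let (R, m) be a local ring and 0 → X^0 → X^1 → ... → X^n a complex of finitely generated R-modules with homology H^i, such that H^k = 0 for all k < j. Then there is an exact sequence 0 → X^0 → X^1 → ... → X^j → Cok(f^{j-1}) → 0, and consequently if depth_R X^i ≥ d - i for all i ≤ j (where d = dim R and j < d), then depth_R Cok(f^{j-1}) ≥ d - j > 0. -/

import Mathlib

open CategoryTheory IsLocalRing
open scoped Classical

universe u

noncomputable section

/-- The depth of a module over a Noetherian local ring: the supremum of lengths of
regular sequences contained in the maximal ideal (with `depth 0 = ⊤`). -/
def rdepth (R : Type u) [CommRing R] [IsLocalRing R]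
    (M : Type u) [AddCommGroup M] [Module R M] : ℕ∞ :=
  if Subsingleton M then ⊤
  else sSup {n : ℕ∞ | ∃ rs : List R, (∀ r ∈ rs, r ∈ IsLocalRing.maximalIdeal R) ∧
    RingTheory.Sequence.IsRegular M rs ∧ (rs.length : ℕ∞) = n}

/-- Vanishing of `Ext^i` over an arbitrary ring. -/
def extVanish (A : Type u) [Ring A] (i : ℕ) (X Y : ModuleCat.{u} A) : Prop :=
  Subsingleton (((Ext ℤ (ModuleCat.{u} A) i).obj (Opposite.op X)).obj Y)

/-- Projective dimension, via vanishing of Ext. -/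
def projDim (A : Type u) [Ring A] (X : Type u) [AddCommGroup X] [Module A X] : ℕ∞ :=
  sInf {n : ℕ∞ | ∀ i : ℕ, n < (i : ℕ∞) → ∀ Y : ModuleCat.{u} A,
    extVanish A i (ModuleCat.of A X) Y}

/-- Global dimension of a ring, via vanishing of Ext. -/
def globalDim (A : Type u) [Ring A] : ℕ∞ :=
  sInf {n : ℕ∞ | ∀ i : ℕ, n < (i : ℕ∞) → ∀ X Y : ModuleCat.{u} A, extVanish A i X Y}

/-- A Noetherian local ring is Cohen-Macaulay if its depth equals its Krull dimension. -/
def IsCMLocalRing (R : Type u) [CommRing R] [IsLocalRing R] : Prop :=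
  (rdepth R R : WithBot ℕ∞) = ringKrullDim R

/-- A ring is Cohen-Macaulay if all its localizations at primes are Cohen-Macaulay. -/
def IsCMRing (R : Type u) [CommRing R] : Prop :=
  ∀ (p : Ideal R) (hp : p.IsPrime),
    letI := hp
    IsCMLocalRing (Localization.AtPrime p)

/-- A canonical module of a local ring: a maximal Cohen-Macaulay module of finite injective
dimension whose endomorphism ring is `R`. -/
structure IsCanonicalModule (R : Type u) [CommRing R] [IsLocalRing R]
    (w : Type u) [AddCommGroup w] [Module R w] : Prop where
  finite : Module.Finite R w
  mcm : (rdepth R w : WithBot ℕ∞) = ringKrullDim R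
  finInjDim : ∃ n : ℕ, ∀ i : ℕ, n < i → ∀ X : ModuleCat.{u} R,
    extVanish R i X (ModuleCat.of R w)
  endIso : Nonempty (Module.End R w ≃+* R)

/-- A canonical module of a (not necessarily local) ring: a finitely generated module
which localizes to a canonical module at every maximal ideal. -/
def IsGlobalCanonicalModule (R : Type u) [CommRing R]
    (w : Type u) [AddCommGroup w] [Module R w] : Prop :=
  Module.Finite R w ∧
  ∀ (m : Ideal R) (hm : m.IsMaximal),
    letI := hm.isPrime
    IsCanonicalModule (Localization.AtPrime m) (LocalizedModule m.primeCompl w)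

/-- The height of a prime ideal. -/
def primeHeight {R : Type u} [CommRing R] (p : Ideal R) (hp : p.IsPrime) : ℕ∞ :=
  Order.height (⟨p, hp⟩ : PrimeSpectrum R)

/-- All maximal ideals have the same height. -/
def EquiCodimensional (R : Type u) [CommRing R] : Prop :=
  ∀ (m₁ m₂ : Ideal R) (h₁ : m₁.IsMaximal) (h₂ : m₂.IsMaximal),
    primeHeight m₁ h₁.isPrime = primeHeight m₂ h₂.isPrime

/-- A non-singular `R`-order: a module-finite `R`-algebra which is a maximal Cohen-Macaulay
`R`-module and such that `gl.dim Λ_p = dim R_p` for all primes `p` of `R`. -/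
structure IsNonsingularOrder (R : Type u) [CommRing R]
    (L : Type u) [Ring L] [Algebra R L] : Prop where
  finite : Module.Finite R L
  mcm : ∀ (p : Ideal R) (hp : p.IsPrime),
    letI := hp
    (rdepth (Localization.AtPrime p) (LocalizedModule p.primeCompl L) : WithBot ℕ∞)
      = ringKrullDim (Localization.AtPrime p)
  gldim : ∀ (p : Ideal R) (hp : p.IsPrime),
    letI := hp
    (globalDim (LocalizedModule p.primeCompl L) : WithBot ℕ∞)
      = ringKrullDim (Localization.AtPrime p)

/-- `Hom_R(M,N)` is a left module over `End_R(M)^op` via precomposition.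
(The paper's convention `fg = f then g` makes its `End_R(M)` the opposite of Mathlib's.) -/
instance endOpModuleHom {R M N : Type u} [CommRing R] [AddCommGroup M] [Module R M]
    [AddCommGroup N] [Module R N] :
    Module (Module.End R M)ᵐᵒᵖ (M →ₗ[R] N) where
  smul a g := g ∘ₗ a.unop
  one_smul g := LinearMap.ext fun _ => rfl
  mul_smul a b g := LinearMap.ext fun _ => rfl
  smul_zero a := LinearMap.ext fun _ => rfl
  smul_add a g h := LinearMap.ext fun _ => rfl
  add_smul a b g := LinearMap.ext fun x => g.map_add _ _
  zero_smul g := LinearMap.ext fun x => g.map_zero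

/-- A noncommutative crepant resolution: `End_R(M)` for a nonzero finitely generated
reflexive `R`-module `M` such that `End_R(M)` is a non-singular `R`-order. -/
def IsNCCR (R : Type u) [CommRing R] (M : Type u) [AddCommGroup M] [Module R M] : Prop :=
  Nontrivial M ∧ Module.Finite R M ∧ Module.IsReflexive R M ∧
    IsNonsingularOrder R (Module.End R M)ᵐᵒᵖ

/-- `X ∈ add M`: `X` is a direct summand of a finite direct sum of copies of `M`. -/
def InAdd (A : Type u) [Ring A] (M : Type u) [AddCommGroup M] [Module A M]
    (X : Type u) [AddCommGroup X] [Module A X] : Prop :=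
  ∃ (n : ℕ) (s : X →ₗ[A] (Fin n → M)) (r : (Fin n → M) →ₗ[A] X),
    r ∘ₗ s = LinearMap.id

end

/-!
Exactness below degree `m` cuts the complex into short exact sequences
`0 → im f^i → X^(i+1) → im f^(i+1) → 0`, ending with `0 → im f^m → X^(m+1) → Cok f^m → 0`.
By Rees' theorem, `depth M ≥ n` means `Ext^i(k, M) = 0` for `i < n`, so the long exact
`Ext(k, -)` sequence gives the depth lemma `depth C ≥ min (depth A - 1) (depth B)`, and
induction along these sequences gives `depth im f^i ≥ d - i`.
-/

open CategoryTheory Abelian RingTheory.Sequence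

namespace CategoryTheory.Abelian.Ext

variable {C : Type*} [Category C] [Abelian C] [HasExt C]

lemma subsingleton_of_isZero {X Y : C} (hY : Limits.IsZero Y) (n : ℕ) :
    Subsingleton (Ext X Y n) :=
  ⟨fun a b => by rw [← comp_mk₀_id a, ← comp_mk₀_id b, hY.eq_zero_of_src (𝟙 Y), mk₀_zero,
    comp_zero, comp_zero]⟩

lemma subsingleton_X₃_of_shortExact {X : C} {S : ShortComplex C} (hS : S.ShortExact) (n : ℕ)
    (h₂ : Subsingleton (Ext X S.X₂ n)) (h₁ : Subsingleton (Ext X S.X₁ (n + 1))) :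
    Subsingleton (Ext X S.X₃ n) :=
  AddCommGrpCat.subsingleton_of_isZero <| ShortComplex.Exact.isZero_of_both_zeros
    (covariant_sequence_exact₃' X hS n (n + 1) rfl)
    ((AddCommGrpCat.isZero_of_iff_subsingleton.mpr h₂).eq_zero_of_src _)
    ((AddCommGrpCat.isZero_of_iff_subsingleton.mpr h₁).eq_zero_of_tgt _)

end CategoryTheory.Abelian.Ext

lemma RingTheory.Sequence.IsRegular.take {R M : Type*} [CommRing R] [AddCommGroup M]
    [Module R M] {rs : List R} (h : IsRegular M rs) (n : ℕ) : IsRegular M (rs.take n) := by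
  refine ⟨?_, fun htop => h.top_ne_smul (le_antisymm (htop.le.trans ?_) le_top)⟩
  · have h' := h.toIsWeaklyRegular
    rw [← List.take_append_drop n rs, isWeaklyRegular_append_iff] at h'
    exact h'.1
  · exact Submodule.smul_mono_left (Ideal.span_mono fun r hr => List.take_subset n rs hr)

section Depth

variable {R : Type u} [CommRing R] [IsLocalRing R]

lemma rdepth_eq_top_of_subsingleton (M : Type u) [AddCommGroup M] [Module R M] [Subsingleton M] :
    rdepth R M = ⊤ :=
  if_pos ‹_›

lemma natCast_le_rdepth_iff_exists_isRegular (M : Type u) [AddCommGroup M] [Module R M]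
    [Nontrivial M] (n : ℕ) :
    (n : ℕ∞) ≤ rdepth R M ↔
      ∃ rs : List R, rs.length = n ∧ (∀ r ∈ rs, r ∈ maximalIdeal R) ∧ IsRegular M rs := by
  rw [rdepth, if_neg (not_subsingleton M)]
  constructor
  · intro h
    rcases Nat.eq_zero_or_pos n with rfl | hn
    · exact ⟨[], rfl, by simp, IsRegular.nil R M⟩
    have hlt : ((n - 1 : ℕ) : ℕ∞) < _ := (Nat.cast_lt.mpr (Nat.sub_lt hn one_pos)).trans_le h
    obtain ⟨_, ⟨rs, hmem, hreg, rfl⟩, hlen⟩ := lt_sSup_iff.mp hlt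
    have hlen : n ≤ rs.length := by rw [Nat.cast_lt] at hlen; omega
    exact ⟨rs.take n, by simpa using hlen, fun r hr => hmem r (List.take_subset n rs hr),
      hreg.take n⟩
  · rintro ⟨rs, rfl, hmem, hreg⟩
    exact le_sSup ⟨rs, hmem, hreg, rfl⟩

lemma rdepth_congr {M N : Type u} [AddCommGroup M] [Module R M] [AddCommGroup N] [Module R N]
    (e : M ≃ₗ[R] N) : rdepth R M = rdepth R N := by
  simp only [rdepth, e.toEquiv.subsingleton_congr, e.isRegular_congr]

variable [IsNoetherianRing R]

lemma natCast_le_rdepth_iff_subsingleton_ext (M : Type u) [AddCommGroup M] [Module R M]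
    [Module.Finite R M] (n : ℕ) :
    (n : ℕ∞) ≤ rdepth R M ↔ ∀ i < n, Subsingleton
      (Ext (ModuleCat.of R (Shrink.{u} (R ⧸ maximalIdeal R))) (ModuleCat.of R M) i) := by
  cases subsingleton_or_nontrivial M with
  | inl _ =>
    simp only [rdepth_eq_top_of_subsingleton, le_top, true_iff]
    exact fun i _ => Ext.subsingleton_of_isZero (ModuleCat.isZero_of_subsingleton _) i
  | inr _ =>
    have hlt : maximalIdeal R • (⊤ : Submodule R M) < ⊤ :=
      (Submodule.top_ne_ideal_smul_of_le_jacobson_annihilator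
        (IsLocalRing.maximalIdeal_le_jacobson _)).symm.lt_top
    rw [natCast_le_rdepth_iff_exists_isRegular]
    exact ((ModuleCat.exists_isRegular_tfae _ n (ModuleCat.of R M) hlt).out 1 3).symm

lemma natCast_le_rdepth_of_exact {A B C : Type u} [AddCommGroup A] [Module R A]
    [Module.Finite R A] [AddCommGroup B] [Module R B] [Module.Finite R B] [AddCommGroup C]
    [Module R C] [Module.Finite R C] {ι : A →ₗ[R] B} {π : B →ₗ[R] C}
    (hι : Function.Injective ι) (hexact : Function.Exact ι π) (hπ : Function.Surjective π)
    {n : ℕ} (hA : ((n + 1 : ℕ) : ℕ∞) ≤ rdepth R A) (hB : (n : ℕ∞) ≤ rdepth R B) :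
    (n : ℕ∞) ≤ rdepth R C := by
  rw [natCast_le_rdepth_iff_subsingleton_ext] at hA hB ⊢
  have hS := ModuleCat.shortComplex_shortExact
    (ModuleCat.shortComplexOfCompEqZero ι π hexact.linearMap_comp_eq_zero) hexact hι hπ
  exact fun i hi => Ext.subsingleton_X₃_of_shortExact hS i (hB i hi) (hA (i + 1) (by omega))

lemma natCast_sub_le_rdepth_range {X : ℕ → Type u} [∀ i, AddCommGroup (X i)]
    [∀ i, Module R (X i)] [∀ i, Module.Finite R (X i)] (f : ∀ i, X i →ₗ[R] X (i + 1))
    (h0 : Function.Injective (f 0)) {d m : ℕ}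
    (hex : ∀ i < m, LinearMap.range (f i) = LinearMap.ker (f (i + 1))) (hmd : m ≤ d)
    (hdepth : ∀ i ≤ m, ((d - i : ℕ) : ℕ∞) ≤ rdepth R (X i)) :
    ∀ i ≤ m, ((d - i : ℕ) : ℕ∞) ≤ rdepth R (LinearMap.range (f i))
  | 0, _ => rdepth_congr (LinearEquiv.ofInjective (f 0) h0) ▸ hdepth 0 (Nat.zero_le m)
  | i + 1, hi => by
    refine natCast_le_rdepth_of_exact (LinearMap.range (f i)).injective_subtype ?_
      (f (i + 1)).surjective_rangeRestrict ?_ (hdepth (i + 1) hi)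
    · rw [LinearMap.exact_iff, LinearMap.ker_rangeRestrict, Submodule.range_subtype, hex i hi]
    · rw [show d - (i + 1) + 1 = d - i by omega]
      exact natCast_sub_le_rdepth_range f h0 hex hmd hdepth i (by omega)

end Depth

theorem stmt16_general (R : Type u) [CommRing R] [IsLocalRing R] [IsNoetherianRing R]
    (d : ℕ)
    (X : ℕ → Type u) [∀ i, AddCommGroup (X i)] [∀ i, Module R (X i)]
    [∀ i, Module.Finite R (X i)]
    (f : ∀ i, X i →ₗ[R] X (i + 1))
    (m : ℕ)
    (h0 : LinearMap.ker (f 0) = ⊥)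
    (hex : ∀ i, i < m → LinearMap.range (f i) = LinearMap.ker (f (i + 1))) :
    (Function.Injective (f 0) ∧
      (∀ i, i < m → Function.Exact (f i) (f (i + 1))) ∧
      Function.Exact (f m) (LinearMap.range (f m)).mkQ ∧
      Function.Surjective (LinearMap.range (f m)).mkQ) ∧
    ((∀ i, i ≤ m + 1 → ((d - i : ℕ) : ℕ∞) ≤ rdepth R (X i)) → m + 1 < d →
      ((d - (m + 1) : ℕ) : ℕ∞) ≤ rdepth R (X (m + 1) ⧸ LinearMap.range (f m)) ∧
      0 < rdepth R (X (m + 1) ⧸ LinearMap.range (f m))) := by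
  have hinj : Function.Injective (f 0) := LinearMap.ker_eq_bot.mp h0
  refine ⟨⟨hinj, fun i hi => LinearMap.exact_iff.mpr (hex i hi).symm,
    LinearMap.exact_map_mkQ_range (f m), Submodule.mkQ_surjective _⟩, fun hdepth hmd => ?_⟩
  have hrange := natCast_sub_le_rdepth_range f hinj hex (by omega)
    (fun i hi => hdepth i (by omega)) m le_rfl
  have hcok : ((d - (m + 1) : ℕ) : ℕ∞) ≤ rdepth R (X (m + 1) ⧸ LinearMap.range (f m)) :=
    natCast_le_rdepth_of_exact (Submodule.injective_subtype _)
      (LinearMap.exact_subtype_mkQ _) (Submodule.mkQ_surjective _)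
      (by rwa [show d - (m + 1) + 1 = d - m by omega]) (hdepth (m + 1) le_rfl)
  exact ⟨hcok, lt_of_lt_of_le (by exact_mod_cast Nat.sub_pos_of_lt hmd) hcok⟩

/-- truncation of a complex exact in low degrees, and the depth of the cokernel. -/
theorem stmt16 (R : Type u) [CommRing R] [IsLocalRing R] [IsNoetherianRing R]
    (d : ℕ) (hd : ringKrullDim R = d)
    (X : ℕ → Type u) [∀ i, AddCommGroup (X i)] [∀ i, Module R (X i)]
    [∀ i, Module.Finite R (X i)]
    (f : ∀ i, X i →ₗ[R] X (i + 1)) (hc : ∀ i, (f (i + 1)) ∘ₗ (f i) = 0)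
    (m : ℕ)
    (h0 : LinearMap.ker (f 0) = ⊥)
    (hex : ∀ i, i < m → LinearMap.range (f i) = LinearMap.ker (f (i + 1))) :
    (Function.Injective (f 0) ∧
      (∀ i, i < m → Function.Exact (f i) (f (i + 1))) ∧
      Function.Exact (f m) (LinearMap.range (f m)).mkQ ∧
      Function.Surjective (LinearMap.range (f m)).mkQ) ∧
    ((∀ i, i ≤ m + 1 → ((d - i : ℕ) : ℕ∞) ≤ rdepth R (X i)) → m + 1 < d →
      ((d - (m + 1) : ℕ) : ℕ∞) ≤ rdepth R (X (m + 1) ⧸ LinearMap.range (f m)) ∧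
      0 < rdepth R (X (m + 1) ⧸ LinearMap.range (f m))) :=
  stmt16_general R d X f m h0 hex
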